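/- Let 𝔗 be a tree ensemble over m real-valued features with K classes, with class scores W(c, x), where the prediction at x is c exactly when W(c, x) > W(c', x) for all classes c' ≠ c. Let v : Fin m → ℝ be an instance predicted as class c. Then a Finset X ⊆ Fin m is a weak AXp for the prediction (i.e., every x : Fin m → ℝ with x i = v i for all i ∈ X is also predicted as c) if and only if for every class c' ≠ c, the maximum of the (nonempty finite) set { W(c', x) − W(c, x) | x : Fin m → ℝ, x i = v i for all i ∈ X } is strictly negative. -/

import Mathlib

/-- Decision trees over `m` real-valued features with labels in `L`. -/
inductive DTree (m : ℕ) (L : Type) : Type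
  | leaf (c : L) : DTree m L
  | node (i : Fin m) (d : ℝ) (tl tr : DTree m L) : DTree m L

/-- Evaluation of a decision tree on an input point. -/
noncomputable def DTree.eval {m : ℕ} {L : Type} : DTree m L → (Fin m → ℝ) → L
  | .leaf c, _ => c
  | .node i d tl tr, x => if x i < d then tl.eval x else tr.eval x

/-- Class score of a tree ensemble: sum of the weights of the leaves reached in
the trees whose reached leaf carries class `c`. -/
noncomputable def ensembleScore {m n K : ℕ} (T : Fin n → DTree m (Fin K × ℝ))
    (c : Fin K) (x : Fin m → ℝ) : ℝ :=
  ∑ t ∈ Finset.univ.filter (fun t : Fin n => ((T t).eval x).1 = c), ((T t).eval x).2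


/-! Each tree has finitely many leaves, and the class scores depend on `x` only through the
leaves it reaches, so every score difference takes finitely many values; a finite nonempty set
of reals has a negative supremum exactly when all its elements are negative. -/

theorem DTree.finite_range_eval {m : ℕ} {L : Type} (t : DTree m L) :
    (Set.range t.eval).Finite := by
  induction t with
  | leaf c => simp [DTree.eval]
  | node i d tl tr htl htr =>
    refine (htl.union htr).subset ?_
    rintro _ ⟨x, rfl⟩
    by_cases hx : x i < d
    · exact Or.inl ⟨x, by simp [DTree.eval, hx]⟩
    · exact Or.inr ⟨x, by simp [DTree.eval, hx]⟩

theorem finite_range_eval_pi {m n : ℕ} {L : Type} (T : Fin n → DTree m L) :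
    (Set.range fun x t => (T t).eval x).Finite :=
  (Set.Finite.pi fun t => (T t).finite_range_eval).subset <| by
    rintro _ ⟨x, rfl⟩ t -
    exact ⟨x, rfl⟩

theorem finite_range_ensembleScore_sub {m n K : ℕ} (T : Fin n → DTree m (Fin K × ℝ))
    (c c' : Fin K) :
    (Set.range fun x => ensembleScore T c' x - ensembleScore T c x).Finite :=
  ((finite_range_eval_pi T).image fun e : Fin n → Fin K × ℝ =>
      (∑ t ∈ Finset.univ.filter (fun t => (e t).1 = c'), (e t).2) -
        ∑ t ∈ Finset.univ.filter (fun t => (e t).1 = c), (e t).2).subset <| by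
    rintro _ ⟨x, rfl⟩
    exact ⟨_, ⟨x, rfl⟩, rfl⟩

theorem waxp_iff_all_max_neg_general (m n K : ℕ) (T : Fin n → DTree m (Fin K × ℝ))
    (c : Fin K) (v : Fin m → ℝ)
    (X : Finset (Fin m)) :
    (∀ c' : Fin K, c' ≠ c →
        ({r : ℝ | ∃ x : Fin m → ℝ, (∀ i ∈ X, x i = v i) ∧
          r = ensembleScore T c' x - ensembleScore T c x} : Set ℝ).Nonempty ∧
        ({r : ℝ | ∃ x : Fin m → ℝ, (∀ i ∈ X, x i = v i) ∧
          r = ensembleScore T c' x - ensembleScore T c x} : Set ℝ).Finite) ∧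
    ((∀ x : Fin m → ℝ, (∀ i ∈ X, x i = v i) →
        ∀ c' : Fin K, c' ≠ c → ensembleScore T c' x < ensembleScore T c x) ↔
      (∀ c' : Fin K, c' ≠ c →
        sSup {r : ℝ | ∃ x : Fin m → ℝ, (∀ i ∈ X, x i = v i) ∧
          r = ensembleScore T c' x - ensembleScore T c x} < 0)) := by
  have hne : ∀ c' : Fin K, ({r : ℝ | ∃ x : Fin m → ℝ, (∀ i ∈ X, x i = v i) ∧
      r = ensembleScore T c' x - ensembleScore T c x} : Set ℝ).Nonempty :=
    fun c' => ⟨_, v, fun _ _ => rfl, rfl⟩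
  have hfin : ∀ c' : Fin K, ({r : ℝ | ∃ x : Fin m → ℝ, (∀ i ∈ X, x i = v i) ∧
      r = ensembleScore T c' x - ensembleScore T c x} : Set ℝ).Finite :=
    fun c' => (finite_range_ensembleScore_sub T c c').subset <| by
      rintro _ ⟨x, -, rfl⟩
      exact ⟨x, rfl⟩
  refine ⟨fun c' _ => ⟨hne c', hfin c'⟩, ?_⟩
  constructor
  · rintro h c' hc'
    refine ((hfin c').csSup_lt_iff (hne c')).2 ?_
    rintro _ ⟨x, hx, rfl⟩
    exact sub_neg.2 (h x hx c' hc')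
  · intro h x hx c' hc'
    exact sub_neg.1 (((hfin c').csSup_lt_iff (hne c')).1 (h c' hc') _ ⟨x, hx, rfl⟩)

/-- A set `X` of features is a weak AXp for the prediction `c` at `v` (every input
agreeing with `v` on `X` is also predicted as `c`, i.e. `c` strictly dominates all
other classes) iff for every class `c' ≠ c` the maximum of the (nonempty finite)
set of score differences `W(c',x) − W(c,x)` over inputs agreeing with `v` on `X`
is strictly negative. -/
theorem waxp_iff_all_max_neg (m n K : ℕ) (T : Fin n → DTree m (Fin K × ℝ))
    (c : Fin K) (v : Fin m → ℝ)
    (hv : ∀ c' : Fin K, c' ≠ c → ensembleScore T c' v < ensembleScore T c v)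
    (X : Finset (Fin m)) :
    (∀ c' : Fin K, c' ≠ c →
        ({r : ℝ | ∃ x : Fin m → ℝ, (∀ i ∈ X, x i = v i) ∧
          r = ensembleScore T c' x - ensembleScore T c x} : Set ℝ).Nonempty ∧
        ({r : ℝ | ∃ x : Fin m → ℝ, (∀ i ∈ X, x i = v i) ∧
          r = ensembleScore T c' x - ensembleScore T c x} : Set ℝ).Finite) ∧
    ((∀ x : Fin m → ℝ, (∀ i ∈ X, x i = v i) →
        ∀ c' : Fin K, c' ≠ c → ensembleScore T c' x < ensembleScore T c x) ↔
      (∀ c' : Fin K, c' ≠ c →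
        sSup {r : ℝ | ∃ x : Fin m → ℝ, (∀ i ∈ X, x i = v i) ∧
          r = ensembleScore T c' x - ensembleScore T c x} < 0)) :=
  waxp_iff_all_max_neg_general m n K T c v X
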